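/- arXiv:2305.04130 — 3 statements merged into one kernel-verified Lean document; each statement's English description precedes it below -/
import Mathlib

section
/- Let N ≥ 1 and let Z_r, Z_i ∈ ℝ^{N×N}. If Z_r is symmetric and Z_i is symmetric positive definite (or symmetric negative definite), then the complex matrix Z = Z_r + i Z_i ∈ ℂ^{N×N} is invertible. -/
/-
If `(A + i B) v = 0` with `A` real symmetric and `v ≠ 0`, then `v* (A + i B) v = 0`. Since `A` is
Hermitian, `v* A v` is real, so the imaginary part of this is `v* B v = xᵀ B x + yᵀ B y`, where
`v = x + i y`; this is nonzero when `B` is definite. The negative definite case follows by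
replacing `A + i B` with `-(A + i B)`.
-/

open Matrix Complex
open scoped ComplexOrder

namespace Matrix

variable {n : Type*}

theorem IsSymm.isHermitian_map_ofReal {A : Matrix n n ℝ} (hA : A.IsSymm) :
    (A.map ofReal).IsHermitian :=
  (isHermitian_iff_isSymm.2 hA).map _ fun _ ↦ (conj_ofReal _).symm

variable [Fintype n]

theorem IsSymm.posDef_of_dotProduct_mulVec_pos {B : Matrix n n ℝ} (hB : B.IsSymm)
    (hpos : ∀ x : n → ℝ, x ≠ 0 → 0 < x ⬝ᵥ B *ᵥ x) : B.PosDef :=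
  .of_dotProduct_mulVec_pos (isHermitian_iff_isSymm.2 hB) fun x hx ↦ by simpa using hpos x hx

theorem re_star_dotProduct_map_ofReal_mulVec (B : Matrix n n ℝ) (v : n → ℂ) :
    (star v ⬝ᵥ B.map ofReal *ᵥ v).re =
      (fun i ↦ (v i).re) ⬝ᵥ B *ᵥ (fun i ↦ (v i).re) +
        (fun i ↦ (v i).im) ⬝ᵥ B *ᵥ (fun i ↦ (v i).im) := by
  simp only [dotProduct, mulVec, Finset.mul_sum, re_sum, ← Finset.sum_add_distrib]
  refine Finset.sum_congr rfl fun i _ ↦ Finset.sum_congr rfl fun j _ ↦ ?_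
  simp only [Pi.star_apply, RCLike.star_def, map_apply, mul_re, mul_im, conj_re, conj_im,
    ofReal_re, ofReal_im]
  ring

theorem PosDef.map_ofReal {B : Matrix n n ℝ} (hB : B.PosDef) : (B.map ofReal).PosDef := by
  have hBℂ := (isHermitian_iff_isSymm.1 hB.isHermitian).isHermitian_map_ofReal
  refine .of_dotProduct_mulVec_pos hBℂ fun v hv ↦ pos_iff.2 ⟨?_, ?_⟩
  · set x : n → ℝ := fun i ↦ (v i).re
    set y : n → ℝ := fun i ↦ (v i).im
    have hpos {w : n → ℝ} (hw : w ≠ 0) : 0 < w ⬝ᵥ B *ᵥ w := by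
      simpa using hB.dotProduct_mulVec_pos hw
    have hnonneg (w : n → ℝ) : 0 ≤ w ⬝ᵥ B *ᵥ w := by
      simpa using hB.posSemidef.dotProduct_mulVec_nonneg w
    have hxy : x ≠ 0 ∨ y ≠ 0 := by
      contrapose! hv
      exact funext fun i ↦ Complex.ext (congrFun hv.1 i) (congrFun hv.2 i)
    rw [re_star_dotProduct_map_ofReal_mulVec]
    rcases hxy with hx | hy
    · exact add_pos_of_pos_of_nonneg (hpos hx) (hnonneg y)
    · exact add_pos_of_nonneg_of_pos (hnonneg x) (hpos hy)
  · exact (hBℂ.im_star_dotProduct_mulVec_self v).symm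

theorem isUnit_add_I_smul_of_isHermitian_of_posDef [DecidableEq n] {A B : Matrix n n ℂ}
    (hA : A.IsHermitian) (hB : B.PosDef) : IsUnit (A + I • B) := by
  rw [isUnit_iff_isUnit_det, isUnit_iff_ne_zero]
  intro hdet
  obtain ⟨v, hv, hkernel⟩ := exists_mulVec_eq_zero_iff.2 hdet
  have hform : star v ⬝ᵥ A *ᵥ v + I * (star v ⬝ᵥ B *ᵥ v) = 0 := by
    rw [← dotProduct_zero (star v), ← hkernel]
    simp only [add_mulVec, smul_mulVec, dotProduct_add, dotProduct_smul, smul_eq_mul]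
  have hAreal : (star v ⬝ᵥ A *ᵥ v).im = 0 := hA.im_star_dotProduct_mulVec_self v
  have hBre : (star v ⬝ᵥ B *ᵥ v).re = 0 := by
    simpa [hAreal] using congrArg im hform
  exact (pos_iff.1 (hB.dotProduct_mulVec_pos hv)).1.ne' hBre

end Matrix

theorem complex_matrix_invertible_of_symm_posDef_general
    (N : ℕ) (Zr Zi : Matrix (Fin N) (Fin N) ℝ)
    (hZr : Zr.IsSymm) (hZi : Zi.IsSymm)
    (hdef : (∀ v : Fin N → ℝ, v ≠ 0 → 0 < v ⬝ᵥ Zi.mulVec v) ∨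
            (∀ v : Fin N → ℝ, v ≠ 0 → v ⬝ᵥ Zi.mulVec v < 0)) :
    IsUnit (Zr.map (fun x => (x : ℂ)) + Complex.I • Zi.map (fun x => (x : ℂ))) := by
  rcases hdef with hpos | hneg
  · exact isUnit_add_I_smul_of_isHermitian_of_posDef hZr.isHermitian_map_ofReal
      (hZi.posDef_of_dotProduct_mulVec_pos hpos).map_ofReal
  · have hnegZi : (-Zi).PosDef :=
      hZi.neg.posDef_of_dotProduct_mulVec_pos fun v hv ↦ by simpa [neg_mulVec] using hneg v hv
    rw [← IsUnit.neg_iff, neg_add, ← smul_neg, ← Matrix.map_neg _ ofReal_neg Zr,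
      ← Matrix.map_neg _ ofReal_neg Zi]
    exact isUnit_add_I_smul_of_isHermitian_of_posDef hZr.neg.isHermitian_map_ofReal
      hnegZi.map_ofReal

/-- If `Zr` is symmetric and `Zi` is symmetric positive (or negative)
definite, then the complex matrix `Z = Zr + I • Zi` is invertible. -/
theorem complex_matrix_invertible_of_symm_posDef
    (N : ℕ) (hN : 1 ≤ N) (Zr Zi : Matrix (Fin N) (Fin N) ℝ)
    (hZr : Zr.IsSymm) (hZi : Zi.IsSymm)
    (hdef : (∀ v : Fin N → ℝ, v ≠ 0 → 0 < v ⬝ᵥ Zi.mulVec v) ∨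
            (∀ v : Fin N → ℝ, v ≠ 0 → v ⬝ᵥ Zi.mulVec v < 0)) :
    IsUnit (Zr.map (fun x => (x : ℂ)) + Complex.I • Zi.map (fun x => (x : ℂ))) :=
  complex_matrix_invertible_of_symm_posDef_general N Zr Zi hZr hZi hdef
end

section
/- Let N ≥ 1, let Z_r, Z_i ∈ ℝ^{N×N} with Z_r symmetric and Z_i symmetric positive definite, and let f_r, f_i ∈ ℝ^N. Set Z̃ = Z_i + Z_r Z_i^{-1} Z_r, x_r = Z̃^{-1}(Z_r Z_i^{-1} f_r + f_i) and x_i = Z_i^{-1}(Z_r x_r − f_r). Then (Z_r + i Z_i)(x_r + i x_i) = f_r + i f_i, i.e., x_r + i x_i solves the complex linear system with matrix Z_r + i Z_i and right-hand side f_r + i f_i. -/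
/-!
Splitting `(Zr + i Zi)(xr + i xi) = fr + i fi` into real and imaginary parts gives the real
block system `Zr xr - Zi xi = fr`, `Zi xr + Zr xi = fi`. The first equation is the definition
of `xi`; substituting it into the second leaves `(Zi + Zr Zi⁻¹ Zr) xr = Zr Zi⁻¹ fr + fi`, the
definition of `xr`. Both inverses are genuine: `Zi` is positive definite, and so is
`Zi + Zr Zi⁻¹ Zr`, being `Zi` plus the congruent image `Zrᴴ Zi⁻¹ Zr` of a positive definite matrix.
-/

open Matrix Complex

namespace Matrix

variable {n : Type*} [Fintype n] [DecidableEq n]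

open scoped ComplexOrder in
theorem PosDef.add_mul_inv_mul {𝕜 : Type*} [RCLike 𝕜] {A B : Matrix n n 𝕜}
    (hA : A.PosDef) (hB : B.IsHermitian) : (A + B * A⁻¹ * B).PosDef := by
  have h := hA.inv.posSemidef.conjTranspose_mul_mul_same B
  rw [hB.eq] at h
  exact hA.add_posSemidef h

variable {R : Type*} [CommRing R]

theorem block_system_of_schur_formula {Zr Zi : Matrix n n R} (hZi : IsUnit Zi.det)
    (hS : IsUnit (Zi + Zr * Zi⁻¹ * Zr).det) {fr fi xr xi : n → R}
    (hxr : xr = (Zi + Zr * Zi⁻¹ * Zr)⁻¹ *ᵥ (Zr *ᵥ (Zi⁻¹ *ᵥ fr) + fi))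
    (hxi : xi = Zi⁻¹ *ᵥ (Zr *ᵥ xr - fr)) :
    Zr *ᵥ xr - Zi *ᵥ xi = fr ∧ Zi *ᵥ xr + Zr *ᵥ xi = fi := by
  have hZi_xi : Zi *ᵥ xi = Zr *ᵥ xr - fr := by
    rw [hxi, mulVec_mulVec, mul_nonsing_inv _ hZi, one_mulVec]
  have hS_xr : (Zi + Zr * Zi⁻¹ * Zr) *ᵥ xr = Zr *ᵥ (Zi⁻¹ *ᵥ fr) + fi := by
    rw [hxr, mulVec_mulVec, mul_nonsing_inv _ hS, one_mulVec]
  rw [add_mulVec, ← mulVec_mulVec, ← mulVec_mulVec] at hS_xr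
  refine ⟨by rw [hZi_xi, sub_sub_cancel], ?_⟩
  rw [hxi, mulVec_sub, mulVec_sub, ← add_sub_assoc, hS_xr, add_sub_cancel_left]

end Matrix

theorem map_ofReal_add_I_smul_mulVec {m n : Type*} [Fintype n] (A B : Matrix m n ℝ)
    (x y : n → ℝ) :
    (A.map ofReal + I • B.map ofReal) *ᵥ (fun k => (x k : ℂ) + I * y k) =
      fun l => ((A *ᵥ x - B *ᵥ y) l : ℂ) + I * ((B *ᵥ x + A *ᵥ y) l : ℂ) := by
  ext l
  have hcast (M : Matrix m n ℝ) (v : n → ℝ) : (M.map ofReal *ᵥ (ofReal ∘ v)) l = (M *ᵥ v) l :=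
    (ofRealHom.map_mulVec M v l).symm
  have hv : (fun k => (x k : ℂ) + I * y k) = ofReal ∘ x + I • (ofReal ∘ y) := rfl
  simp only [hv, add_mulVec, mulVec_add, smul_mulVec, mulVec_smul, Pi.add_apply, Pi.smul_apply,
    smul_eq_mul, hcast, Pi.sub_apply]
  push_cast
  linear_combination (↑((B *ᵥ y) l) : ℂ) * I_sq

theorem complex_system_solution_formula_general
    (N : ℕ) (Zr Zi : Matrix (Fin N) (Fin N) ℝ)
    (hZr : Zr.IsSymm) (hZi : Zi.IsSymm)
    (hpos : ∀ v : Fin N → ℝ, v ≠ 0 → 0 < v ⬝ᵥ Zi.mulVec v)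
    (fr fi xr xi : Fin N → ℝ)
    (hxr : xr = (Zi + Zr * Zi⁻¹ * Zr)⁻¹.mulVec (Zr.mulVec (Zi⁻¹.mulVec fr) + fi))
    (hxi : xi = Zi⁻¹.mulVec (Zr.mulVec xr - fr)) :
    (Zr.map (fun x => (x : ℂ)) + Complex.I • Zi.map (fun x => (x : ℂ))).mulVec
        (fun ℓ => (xr ℓ : ℂ) + Complex.I * (xi ℓ : ℂ)) =
      fun ℓ => (fr ℓ : ℂ) + Complex.I * (fi ℓ : ℂ) := by
  have hZi_pos : Zi.PosDef :=
    posDef_iff_dotProduct_mulVec.2 ⟨isHermitian_iff_isSymm.2 hZi, by simpa using hpos⟩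
  have hS_pos := hZi_pos.add_mul_inv_mul (isHermitian_iff_isSymm.2 hZr)
  obtain ⟨hre, him⟩ := block_system_of_schur_formula ((isUnit_iff_isUnit_det _).1 hZi_pos.isUnit)
    ((isUnit_iff_isUnit_det _).1 hS_pos.isUnit) hxr hxi
  rw [map_ofReal_add_I_smul_mulVec, hre, him]

/-- Explicit solution formula for the complex linear system
`(Zr + i Zi)(xr + i xi) = fr + i fi` via the Schur complement `Z̃ = Zi + Zr Zi⁻¹ Zr`. -/
theorem complex_system_solution_formula
    (N : ℕ) (hN : 1 ≤ N) (Zr Zi : Matrix (Fin N) (Fin N) ℝ)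
    (hZr : Zr.IsSymm) (hZi : Zi.IsSymm)
    (hpos : ∀ v : Fin N → ℝ, v ≠ 0 → 0 < v ⬝ᵥ Zi.mulVec v)
    (fr fi xr xi : Fin N → ℝ)
    (hxr : xr = (Zi + Zr * Zi⁻¹ * Zr)⁻¹.mulVec (Zr.mulVec (Zi⁻¹.mulVec fr) + fi))
    (hxi : xi = Zi⁻¹.mulVec (Zr.mulVec xr - fr)) :
    (Zr.map (fun x => (x : ℂ)) + Complex.I • Zi.map (fun x => (x : ℂ))).mulVec
        (fun ℓ => (xr ℓ : ℂ) + Complex.I * (xi ℓ : ℂ)) =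
      fun ℓ => (fr ℓ : ℂ) + Complex.I * (fi ℓ : ℂ) :=
  complex_system_solution_formula_general N Zr Zi hZr hZi hpos fr fi xr xi hxr hxi
end

section
/- For every C̃ > 0, if the feasible set U'' = { u ∈ U_ad : ‖u‖₂ ≤ C̃ and ∫₀^{2π} h_ℓ(u, θ) D(θ) dθ = 0 for all ℓ = 1,…,N_b } is nonempty, then the stochastic constrained problem min_{u ∈ U''} j̃(u) admits a solution: there exists u* ∈ U'' such that j̃(u*) ≤ j̃(u) for all u ∈ U''. -/
open Matrix Complex Filter MeasureTheory Set

/-- The impedance matrix `Z_q(u) = -ω_q²(M + A_q) - i ω_q (B_q + C) + K + S`,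
where `u = (c, s)`, `C = diagonal c` and `S = diagonal s`. -/
noncomputable def Zmat {Nb Nf : ℕ} (ω : Fin Nf → ℝ)
    (A B : Fin Nf → Matrix (Fin Nb) (Fin Nb) ℝ)
    (M K : Matrix (Fin Nb) (Fin Nb) ℝ)
    (u : (Fin Nb → ℝ) × (Fin Nb → ℝ)) (q : Fin Nf) :
    Matrix (Fin Nb) (Fin Nb) ℂ :=
  ((-(ω q) ^ 2) • (M + A q) + K + Matrix.diagonal u.2).map (fun x => (x : ℂ))
    + Complex.I • (((-(ω q)) • (B q + Matrix.diagonal u.1)).map (fun x => (x : ℂ)))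

/-- The admissible set `U_ad = {(c, s) : c_ℓ ≥ ε, s_ℓ ≥ γ for all ℓ}`. -/
def Uad (Nb : ℕ) (ε γ : ℝ) : Set ((Fin Nb → ℝ) × (Fin Nb → ℝ)) :=
  {u | ∀ ℓ, ε ≤ u.1 ℓ ∧ γ ≤ u.2 ℓ}

/-- The state `ζ_q(u) = Z_q(u)⁻¹ F_q`. -/
noncomputable def zeta {Nb Nf : ℕ} (ω : Fin Nf → ℝ)
    (A B : Fin Nf → Matrix (Fin Nb) (Fin Nb) ℝ)
    (M K : Matrix (Fin Nb) (Fin Nb) ℝ) (F : Fin Nf → Fin Nb → ℂ)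
    (u : (Fin Nb → ℝ) × (Fin Nb → ℝ)) (q : Fin Nf) : Fin Nb → ℂ :=
  (Zmat ω A B M K u q)⁻¹.mulVec (F q)

/-- The reduced cost `J̃(u) = -(1/2) Σ_q ω_q² ζ_q(u)^H C ζ_q(u)` (a real number). -/
noncomputable def Jtil {Nb Nf : ℕ} (ω : Fin Nf → ℝ)
    (A B : Fin Nf → Matrix (Fin Nb) (Fin Nb) ℝ)
    (M K : Matrix (Fin Nb) (Fin Nb) ℝ) (F : Fin Nf → Fin Nb → ℂ)
    (u : (Fin Nb → ℝ) × (Fin Nb → ℝ)) : ℝ :=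
  -(1/2) * ∑ q, (ω q) ^ 2 *
    (star (zeta ω A B M K F u q) ⬝ᵥ
      (((Matrix.diagonal u.1).map (fun x => (x : ℂ))).mulVec (zeta ω A B M K F u q))).re

/-- The Euclidean norm of a control vector `u = (c, s)`. -/
noncomputable def unorm {Nb : ℕ} (u : (Fin Nb → ℝ) × (Fin Nb → ℝ)) : ℝ :=
  Real.sqrt (∑ ℓ, (u.1 ℓ) ^ 2 + ∑ ℓ, (u.2 ℓ) ^ 2)

/-- The state `ζ_q(u, θ) = Z_q(u)⁻¹ F_q(θ)` for incident wave direction `θ`. -/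
noncomputable def zetaT {Nb Nf : ℕ} (ω : Fin Nf → ℝ)
    (A B : Fin Nf → Matrix (Fin Nb) (Fin Nb) ℝ)
    (M K : Matrix (Fin Nb) (Fin Nb) ℝ) (F : Fin Nf → ℝ → Fin Nb → ℂ)
    (u : (Fin Nb → ℝ) × (Fin Nb → ℝ)) (θ : ℝ) (q : Fin Nf) : Fin Nb → ℂ :=
  (Zmat ω A B M K u q)⁻¹.mulVec (F q θ)

/-- The cost `J̃(u, θ) = -(1/2) Σ_q ω_q² ζ_q(u, θ)^H C ζ_q(u, θ)` for direction `θ`. -/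
noncomputable def JtilT {Nb Nf : ℕ} (ω : Fin Nf → ℝ)
    (A B : Fin Nf → Matrix (Fin Nb) (Fin Nb) ℝ)
    (M K : Matrix (Fin Nb) (Fin Nb) ℝ) (F : Fin Nf → ℝ → Fin Nb → ℂ)
    (u : (Fin Nb → ℝ) × (Fin Nb → ℝ)) (θ : ℝ) : ℝ :=
  -(1/2) * ∑ q, (ω q) ^ 2 *
    (star (zetaT ω A B M K F u θ q) ⬝ᵥ
      (((Matrix.diagonal u.1).map (fun x => (x : ℂ))).mulVec (zetaT ω A B M K F u θ q))).re

/-- The expected cost `j̃(u) = ∫₀^{2π} J̃(u, θ) D(θ) dθ`. -/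
noncomputable def jtil {Nb Nf : ℕ} (ω : Fin Nf → ℝ)
    (A B : Fin Nf → Matrix (Fin Nb) (Fin Nb) ℝ)
    (M K : Matrix (Fin Nb) (Fin Nb) ℝ) (F : Fin Nf → ℝ → Fin Nb → ℂ)
    (D : ℝ → ℝ) (u : (Fin Nb → ℝ) × (Fin Nb → ℝ)) : ℝ :=
  ∫ θ in (0 : ℝ)..(2 * Real.pi), JtilT ω A B M K F u θ * D θ

/-- The slamming constraint function
`g_ℓ(u, θ) = Σ_q |ζ_{qℓ}(u, θ) − η_{qℓ}(θ)|² − 2α²d_ℓ²`. -/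
noncomputable def gconT {Nb Nf : ℕ} (ω : Fin Nf → ℝ)
    (A B : Fin Nf → Matrix (Fin Nb) (Fin Nb) ℝ)
    (M K : Matrix (Fin Nb) (Fin Nb) ℝ) (F : Fin Nf → ℝ → Fin Nb → ℂ)
    (η : Fin Nf → Fin Nb → ℝ → ℂ) (α : ℝ) (d : Fin Nb → ℝ)
    (u : (Fin Nb → ℝ) × (Fin Nb → ℝ)) (θ : ℝ) (ℓ : Fin Nb) : ℝ :=
  (∑ q, ‖zetaT ω A B M K F u θ q ℓ - η q ℓ θ‖ ^ 2) - 2 * α ^ 2 * d ℓ ^ 2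

/-- The equality-constraint reformulation `h_ℓ(u, θ) = (max(g_ℓ(u, θ), 0))²`. -/
noncomputable def hconT {Nb Nf : ℕ} (ω : Fin Nf → ℝ)
    (A B : Fin Nf → Matrix (Fin Nb) (Fin Nb) ℝ)
    (M K : Matrix (Fin Nb) (Fin Nb) ℝ) (F : Fin Nf → ℝ → Fin Nb → ℂ)
    (η : Fin Nf → Fin Nb → ℝ → ℂ) (α : ℝ) (d : Fin Nb → ℝ)
    (u : (Fin Nb → ℝ) × (Fin Nb → ℝ)) (θ : ℝ) (ℓ : Fin Nb) : ℝ :=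
  max (gconT ω A B M K F η α d u θ ℓ) 0 ^ 2

/-- The expected constraint function `H_ℓ(u) = ∫₀^{2π} h_ℓ(u, θ) D(θ) dθ`. -/
noncomputable def Hcon {Nb Nf : ℕ} (ω : Fin Nf → ℝ)
    (A B : Fin Nf → Matrix (Fin Nb) (Fin Nb) ℝ)
    (M K : Matrix (Fin Nb) (Fin Nb) ℝ) (F : Fin Nf → ℝ → Fin Nb → ℂ)
    (η : Fin Nf → Fin Nb → ℝ → ℂ) (α : ℝ) (d : Fin Nb → ℝ) (D : ℝ → ℝ)
    (u : (Fin Nb → ℝ) × (Fin Nb → ℝ)) (ℓ : Fin Nb) : ℝ :=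
  ∫ θ in (0 : ℝ)..(2 * Real.pi), hconT ω A B M K F η α d u θ ℓ * D θ

/-!
Positive damping makes every impedance matrix `Z_q(u) = X - iY` invertible on `U_ad`: if
`Z (a + ib) = 0` with `a, b` real, then `Xa = -Yb` and `Xb = Ya`, so the symmetry of `X` gives
`aᵀYa + bᵀYb = 0`, while `Y = ω_q (B_q + C)` is positive definite once `c > 0`. Hence the states,
`J̃` and `h_ℓ` are jointly continuous in `(u, θ)` on the compact set
`(U_ad ∩ {‖u‖₂ ≤ C̃}) × [0, 2π]`, and by dominated convergence so are their `D`-weighted integrals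
in `u`. The feasible set is a closed subset of this compact set, on which `j̃` attains its minimum.
-/

namespace Matrix

variable {n : Type*} [Fintype n]

lemma re_map_ofReal_sub_I_smul_mulVec (X Y : Matrix n n ℝ) (v : n → ℂ) (i : n) :
    (((X.map ((↑) : ℝ → ℂ) - Complex.I • Y.map ((↑) : ℝ → ℂ)) *ᵥ v) i).re
      = (X *ᵥ fun j => (v j).re) i + (Y *ᵥ fun j => (v j).im) i := by
  simp [mulVec, dotProduct, Complex.re_sum, sub_mul]

lemma im_map_ofReal_sub_I_smul_mulVec (X Y : Matrix n n ℝ) (v : n → ℂ) (i : n) :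
    (((X.map ((↑) : ℝ → ℂ) - Complex.I • Y.map ((↑) : ℝ → ℂ)) *ᵥ v) i).im
      = (X *ᵥ fun j => (v j).im) i - (Y *ᵥ fun j => (v j).re) i := by
  simp [mulVec, dotProduct, Complex.im_sum, sub_mul, Finset.sum_sub_distrib]

theorem det_map_ofReal_sub_I_smul_ne_zero [DecidableEq n] {X Y : Matrix n n ℝ} (hX : X.IsSymm)
    (hY : ∀ w ≠ 0, 0 < w ⬝ᵥ Y *ᵥ w) :
    (X.map ((↑) : ℝ → ℂ) - Complex.I • Y.map ((↑) : ℝ → ℂ)).det ≠ 0 := by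
  intro hdet
  obtain ⟨v, hv, hZv⟩ := exists_mulVec_eq_zero_iff.mpr hdet
  set a : n → ℝ := fun j => (v j).re
  set b : n → ℝ := fun j => (v j).im
  have hYb : Y *ᵥ b = -(X *ᵥ a) := funext fun i => by
    have := congrArg Complex.re (congrFun hZv i)
    rw [re_map_ofReal_sub_I_smul_mulVec] at this
    simp only [Pi.zero_apply, Complex.zero_re] at this
    simp only [Pi.neg_apply]
    linarith
  have hYa : Y *ᵥ a = X *ᵥ b := funext fun i => by
    have := congrArg Complex.im (congrFun hZv i)
    rw [im_map_ofReal_sub_I_smul_mulVec] at this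
    simp only [Pi.zero_apply, Complex.zero_im] at this
    linarith
  have hsum : a ⬝ᵥ Y *ᵥ a + b ⬝ᵥ Y *ᵥ b = 0 := by
    rw [hYa, hYb, dotProduct_neg, dotProduct_mulVec b, ← mulVec_transpose, hX.eq,
      dotProduct_comm (X *ᵥ b), add_neg_cancel]
  have hY_nonneg : ∀ w, 0 ≤ w ⬝ᵥ Y *ᵥ w := fun w => by
    rcases eq_or_ne w 0 with rfl | hw
    · simp
    · exact (hY w hw).le
  have ha : a = 0 := by
    by_contra ha
    linarith [hY a ha, hY_nonneg b]
  have hb : b = 0 := by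
    by_contra hb
    linarith [hY b hb, hY_nonneg a]
  exact hv (funext fun j => Complex.ext (congrFun ha j) (congrFun hb j))

end Matrix

theorem continuousOn_intervalIntegral_mul_of_continuousOn_prod {X : Type*} [TopologicalSpace X]
    [FirstCountableTopology X] {s : Set X} (hs : IsCompact s) {G : X → ℝ → ℝ} {a b : ℝ}
    (hab : a ≤ b)
    (hG : ContinuousOn (fun p : X × ℝ => G p.1 p.2) (s ×ˢ Icc a b))
    {D : ℝ → ℝ} (hD : IntegrableOn D (Icc a b)) :
    ContinuousOn (fun x => ∫ t in a..b, G x t * D t) s := by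
  obtain ⟨C, hC⟩ := (hs.prod isCompact_Icc).exists_bound_of_continuousOn hG
  have hGx : ∀ x ∈ s, ContinuousOn (G x) (Icc a b) := fun x hx =>
    hG.comp (Continuous.prodMk_right x).continuousOn fun t ht => ⟨hx, ht⟩
  simp only [intervalIntegral.integral_of_le hab]
  refine continuousOn_of_dominated (bound := fun t => C * ‖D t‖) (fun x hx => ?_)
    (fun x hx => ?_) ((hD.mono_set Ioc_subset_Icc_self).norm.const_mul C) ?_
  · exact ((hGx x hx).mono Ioc_subset_Icc_self).aestronglyMeasurable measurableSet_Ioc |>.mul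
      (hD.mono_set Ioc_subset_Icc_self).aestronglyMeasurable
  · refine ae_restrict_of_forall_mem measurableSet_Ioc fun t ht => ?_
    rw [norm_mul]
    exact mul_le_mul_of_nonneg_right (hC (x, t) ⟨hx, Ioc_subset_Icc_self ht⟩) (norm_nonneg _)
  · refine ae_restrict_of_forall_mem measurableSet_Ioc fun t ht => ?_
    exact (hG.comp (Continuous.prodMk_left t).continuousOn
      fun x hx => ⟨hx, Ioc_subset_Icc_self ht⟩).mul continuousOn_const

theorem IsCompact.sep_forall_eq {X ι Y : Type*} [TopologicalSpace X] [TopologicalSpace Y]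
    [T1Space Y] {K : Set X} (hK : IsCompact K) {f : ι → X → Y} (hf : ∀ i, ContinuousOn (f i) K)
    (y : ι → Y) : IsCompact {x ∈ K | ∀ i, f i x = y i} := by
  obtain ⟨U, hU, hKU⟩ :=
    continuousOn_iff_isClosed.1 (continuousOn_pi.2 hf) {y} isClosed_singleton
  have : {x ∈ K | ∀ i, f i x = y i} = U ∩ K := by
    rw [← hKU]; ext x; simp [funext_iff, and_comm]
  exact this ▸ hK.inter_left hU

section Impedance

variable {Nb Nf : ℕ} (ω : Fin Nf → ℝ) (A B : Fin Nf → Matrix (Fin Nb) (Fin Nb) ℝ)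
  (M K : Matrix (Fin Nb) (Fin Nb) ℝ)

lemma Zmat_eq_map_ofReal_sub_I_smul (u : (Fin Nb → ℝ) × (Fin Nb → ℝ)) (q : Fin Nf) :
    Zmat ω A B M K u q = ((-(ω q) ^ 2) • (M + A q) + K + diagonal u.2).map ((↑) : ℝ → ℂ)
      - Complex.I • (ω q • (B q + diagonal u.1)).map ((↑) : ℝ → ℂ) := by
  ext i j
  simp [Zmat, sub_eq_add_neg]
  ring

variable {ω A B M K}

theorem Zmat_det_ne_zero {q : Fin Nf} (hω : 0 < ω q) (hA : (A q).IsSymm)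
    (hB : ∀ v, 0 ≤ v ⬝ᵥ B q *ᵥ v) (hM : M.IsDiag) (hK : K.IsDiag)
    {u : (Fin Nb → ℝ) × (Fin Nb → ℝ)} (hc : ∀ ℓ, 0 < u.1 ℓ) :
    (Zmat ω A B M K u q).det ≠ 0 := by
  rw [Zmat_eq_map_ofReal_sub_I_smul]
  refine det_map_ofReal_sub_I_smul_ne_zero
    ((((hM.isSymm.add hA).smul _).add hK.isSymm).add (isSymm_diagonal _)) fun w hw => ?_
  have hC : 0 < w ⬝ᵥ diagonal u.1 *ᵥ w := (PosDef.diagonal hc).dotProduct_mulVec_pos hw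
  rw [smul_mulVec, add_mulVec, dotProduct_smul, dotProduct_add, smul_eq_mul]
  exact mul_pos hω (add_pos_of_nonneg_of_pos (hB w) hC)

end Impedance

section Continuity

variable {Nb Nf : ℕ} {ω : Fin Nf → ℝ} {A B : Fin Nf → Matrix (Fin Nb) (Fin Nb) ℝ}
  {M K : Matrix (Fin Nb) (Fin Nb) ℝ} {F : Fin Nf → ℝ → Fin Nb → ℂ}
  {s : Set ((Fin Nb → ℝ) × (Fin Nb → ℝ))} {t : Set ℝ}

variable (ω A B M K) in
lemma continuous_Zmat (q : Fin Nf) : Continuous fun u => Zmat ω A B M K u q := by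
  unfold Zmat; fun_prop

lemma continuousOn_Zmat_inv {q : Fin Nf} (hs : ∀ u ∈ s, (Zmat ω A B M K u q).det ≠ 0) :
    ContinuousOn (fun u => (Zmat ω A B M K u q)⁻¹) s := by
  intro u hu
  have hdet : ContinuousAt Ring.inverse (Zmat ω A B M K u q).det := by
    rw [Ring.inverse_eq_inv']
    exact continuousAt_inv₀ (hs u hu)
  exact ((continuousAt_matrix_inv _ hdet).comp (f := (Zmat ω A B M K · q))
    (continuous_Zmat ω A B M K q).continuousAt).continuousWithinAt

lemma continuousOn_zetaT {q : Fin Nf} (hs : ∀ u ∈ s, (Zmat ω A B M K u q).det ≠ 0)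
    (hF : ContinuousOn (F q) t) :
    ContinuousOn (fun p : _ × ℝ => zetaT ω A B M K F p.1 p.2 q) (s ×ˢ t) := by
  have hinv : ContinuousOn (fun p : _ × ℝ => (Zmat ω A B M K p.1 q)⁻¹) (s ×ˢ t) :=
    (continuousOn_Zmat_inv hs).comp continuousOn_fst mapsTo_fst_prod
  have hmulVec : Continuous fun x : Matrix (Fin Nb) (Fin Nb) ℂ × (Fin Nb → ℂ) => x.1 *ᵥ x.2 :=
    continuous_fst.matrix_mulVec continuous_snd
  exact (hmulVec.comp_continuousOn (hinv.prodMk (hF.comp continuousOn_snd mapsTo_snd_prod)) :)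

lemma continuousOn_JtilT (hs : ∀ u ∈ s, ∀ q, (Zmat ω A B M K u q).det ≠ 0)
    (hF : ∀ q, ContinuousOn (F q) t) :
    ContinuousOn (fun p : _ × ℝ => JtilT ω A B M K F p.1 p.2) (s ×ˢ t) := by
  have hζ : ContinuousOn (fun p : _ × ℝ => fun q => zetaT ω A B M K F p.1 p.2 q) (s ×ˢ t) :=
    continuousOn_pi.2 fun q => continuousOn_zetaT (fun u hu => hs u hu q) (hF q)
  unfold JtilT
  fun_prop

lemma continuousOn_hconT {η : Fin Nf → Fin Nb → ℝ → ℂ} {α : ℝ} {d : Fin Nb → ℝ}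
    (hs : ∀ u ∈ s, ∀ q, (Zmat ω A B M K u q).det ≠ 0)
    (hF : ∀ q, ContinuousOn (F q) t) (hη : ∀ q ℓ, ContinuousOn (η q ℓ) t) (ℓ : Fin Nb) :
    ContinuousOn (fun p : _ × ℝ => hconT ω A B M K F η α d p.1 p.2 ℓ) (s ×ˢ t) := by
  have hζ : ContinuousOn (fun p : _ × ℝ => fun q => zetaT ω A B M K F p.1 p.2 q) (s ×ˢ t) :=
    continuousOn_pi.2 fun q => continuousOn_zetaT (fun u hu => hs u hu q) (hF q)
  have hη' : ContinuousOn (fun p : _ × ℝ => fun q => η q ℓ p.2) (s ×ˢ t) :=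
    continuousOn_pi.2 fun q => (hη q ℓ).comp continuousOn_snd mapsTo_snd_prod
  unfold hconT gconT
  fun_prop

end Continuity

lemma norm_le_unorm {Nb : ℕ} (u : (Fin Nb → ℝ) × (Fin Nb → ℝ)) : ‖u‖ ≤ unorm u := by
  have hsq : ∀ v : Fin Nb → ℝ, ∀ ℓ, v ℓ ^ 2 ≤ ∑ i, v i ^ 2 := fun v ℓ =>
    Finset.single_le_sum (f := fun i => v i ^ 2) (fun i _ => sq_nonneg _) (Finset.mem_univ ℓ)
  have hnn : ∀ v : Fin Nb → ℝ, 0 ≤ ∑ i, v i ^ 2 := fun v => by positivity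
  refine max_le ((pi_norm_le_iff_of_nonneg (Real.sqrt_nonneg _)).2 fun ℓ => ?_)
    ((pi_norm_le_iff_of_nonneg (Real.sqrt_nonneg _)).2 fun ℓ => ?_)
  · exact Real.abs_le_sqrt (by linarith [hsq u.1 ℓ, hnn u.2])
  · exact Real.abs_le_sqrt (by linarith [hsq u.2 ℓ, hnn u.1])

lemma continuous_unorm {Nb : ℕ} : Continuous (unorm (Nb := Nb)) := by
  unfold unorm; fun_prop

lemma isClosed_Uad (Nb : ℕ) (ε γ : ℝ) : IsClosed (Uad Nb ε γ) := by
  simp only [Uad, ofPred_forall, ofPred_and]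
  exact isClosed_iInter fun ℓ => (isClosed_le continuous_const (by fun_prop)).inter
    (isClosed_le continuous_const (by fun_prop))

lemma isCompact_Uad_inter_unorm_le (Nb : ℕ) (ε γ C : ℝ) :
    IsCompact (Uad Nb ε γ ∩ {u | unorm u ≤ C}) :=
  Metric.isCompact_of_isClosed_isBounded
    ((isClosed_Uad Nb ε γ).inter (isClosed_le continuous_unorm continuous_const))
    (isBounded_iff_forall_norm_le.2 ⟨C, fun u hu => (norm_le_unorm u).trans hu.2⟩)

theorem jtil_exists_minimizer_constrained_general
    (Nb Nf : ℕ)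
    (ω : Fin Nf → ℝ) (hω : ∀ q, 0 < ω q)
    (A B : Fin Nf → Matrix (Fin Nb) (Fin Nb) ℝ)
    (hA : ∀ q, (A q).IsSymm)
    (hBpsd : ∀ (q : Fin Nf) (v : Fin Nb → ℝ), 0 ≤ v ⬝ᵥ (B q).mulVec v)
    (M K : Matrix (Fin Nb) (Fin Nb) ℝ) (hM : M.IsDiag) (hK : K.IsDiag)
    (ε γ : ℝ) (hε : 0 < ε)
    (D : ℝ → ℝ)
    (hDint : IntegrableOn D (Set.Icc (0 : ℝ) (2 * Real.pi)))
    (F : Fin Nf → ℝ → Fin Nb → ℂ)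
    (hFcont : ∀ q, ContinuousOn (F q) (Set.Icc (0 : ℝ) (2 * Real.pi)))
    (η : Fin Nf → Fin Nb → ℝ → ℂ)
    (hηcont : ∀ q ℓ, ContinuousOn (η q ℓ) (Set.Icc (0 : ℝ) (2 * Real.pi)))
    (α : ℝ) (d : Fin Nb → ℝ) :
    ∀ Ctil > (0 : ℝ),
      ({u ∈ Uad Nb ε γ | unorm u ≤ Ctil ∧
          ∀ ℓ, Hcon ω A B M K F η α d D u ℓ = 0}).Nonempty →
      ∃ u ∈ {u ∈ Uad Nb ε γ | unorm u ≤ Ctil ∧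
          ∀ ℓ, Hcon ω A B M K F η α d D u ℓ = 0},
        ∀ v ∈ {u ∈ Uad Nb ε γ | unorm u ≤ Ctil ∧
            ∀ ℓ, Hcon ω A B M K F η α d D u ℓ = 0},
          jtil ω A B M K F D u ≤ jtil ω A B M K F D v := by
  intro Ctil _ hne
  set U := Uad Nb ε γ ∩ {u | unorm u ≤ Ctil}
  have hU : IsCompact U := isCompact_Uad_inter_unorm_le Nb ε γ Ctil
  have hdet : ∀ u ∈ U, ∀ q, (Zmat ω A B M K u q).det ≠ 0 := fun u hu q =>
    Zmat_det_ne_zero (hω q) (hA q) (hBpsd q) hM hK fun ℓ => hε.trans_le (hu.1 ℓ).1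
  have h2π : (0 : ℝ) ≤ 2 * Real.pi := Real.two_pi_pos.le
  have hH : ∀ ℓ, ContinuousOn (Hcon ω A B M K F η α d D · ℓ) U := fun ℓ =>
    continuousOn_intervalIntegral_mul_of_continuousOn_prod hU h2π
      (continuousOn_hconT hdet hFcont hηcont ℓ) hDint
  have hfeasible : {u ∈ Uad Nb ε γ | unorm u ≤ Ctil ∧ ∀ ℓ, Hcon ω A B M K F η α d D u ℓ = 0}
      = {u ∈ U | ∀ ℓ, Hcon ω A B M K F η α d D u ℓ = 0} := Set.ext fun _ => and_assoc.symm
  rw [hfeasible] at hne ⊢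
  obtain ⟨u, hu, hmin⟩ := (hU.sep_forall_eq hH 0).exists_isMinOn hne
    ((continuousOn_intervalIntegral_mul_of_continuousOn_prod hU h2π
      (continuousOn_JtilT hdet hFcont) hDint).mono fun u hu => hu.1)
  exact ⟨u, hu, fun v hv => hmin hv⟩

/-- For every `C̃ > 0`, if the stochastic feasible set
`U'' = {u ∈ U_ad : ‖u‖₂ ≤ C̃ and E_θ[h_ℓ(u, ·)] = 0 ∀ℓ}` is nonempty, then the
stochastic constrained problem `min_{u ∈ U''} j̃(u)` admits a solution. -/
theorem jtil_exists_minimizer_constrained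
    (Nb Nf : ℕ) (hNb : 1 ≤ Nb) (hNf : 1 ≤ Nf)
    (ω : Fin Nf → ℝ) (hω : ∀ q, 0 < ω q)
    (A B : Fin Nf → Matrix (Fin Nb) (Fin Nb) ℝ)
    (hA : ∀ q, (A q).IsSymm) (hB : ∀ q, (B q).IsSymm)
    (hBpsd : ∀ (q : Fin Nf) (v : Fin Nb → ℝ), 0 ≤ v ⬝ᵥ (B q).mulVec v)
    (M K : Matrix (Fin Nb) (Fin Nb) ℝ) (hM : M.IsDiag) (hK : K.IsDiag)
    (ε γ : ℝ) (hε : 0 < ε)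
    (D : ℝ → ℝ) (hDnn : ∀ θ ∈ Set.Icc (0 : ℝ) (2 * Real.pi), 0 ≤ D θ)
    (hDint : IntegrableOn D (Set.Icc (0 : ℝ) (2 * Real.pi)))
    (hDone : (∫ θ in (0 : ℝ)..(2 * Real.pi), D θ) = 1)
    (F : Fin Nf → ℝ → Fin Nb → ℂ)
    (hFcont : ∀ q, ContinuousOn (F q) (Set.Icc (0 : ℝ) (2 * Real.pi)))
    (η : Fin Nf → Fin Nb → ℝ → ℂ)
    (hηcont : ∀ q ℓ, ContinuousOn (η q ℓ) (Set.Icc (0 : ℝ) (2 * Real.pi)))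
    (α : ℝ) (hα : 0 < α) (d : Fin Nb → ℝ) (hd : ∀ ℓ, 0 < d ℓ) :
    ∀ Ctil > (0 : ℝ),
      ({u ∈ Uad Nb ε γ | unorm u ≤ Ctil ∧
          ∀ ℓ, Hcon ω A B M K F η α d D u ℓ = 0}).Nonempty →
      ∃ u ∈ {u ∈ Uad Nb ε γ | unorm u ≤ Ctil ∧
          ∀ ℓ, Hcon ω A B M K F η α d D u ℓ = 0},
        ∀ v ∈ {u ∈ Uad Nb ε γ | unorm u ≤ Ctil ∧
            ∀ ℓ, Hcon ω A B M K F η α d D u ℓ = 0},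
          jtil ω A B M K F D u ≤ jtil ω A B M K F D v :=
  jtil_exists_minimizer_constrained_general Nb Nf ω hω A B hA hBpsd M K hM hK ε γ hε D hDint F
    hFcont η hηcont α d
end
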